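/- arXiv:2311.14375 — 2 statements merged into one kernel-verified Lean document; each statement's English description precedes it below -/
import Mathlib

section
/- For every natural number n ≥ 1, the n-th derivative of the real polynomial (X² − 1)ⁿ is a polynomial of degree n that has exactly n distinct real roots, all of which lie in the open interval (−1, 1). -/
open Polynomial

private lemma aux_dvd_deriv {q p : ℝ[X]} {m : ℕ} (h : q ^ (m + 1) ∣ p) :
    q ^ m ∣ Polynomial.derivative p := by
  obtain ⟨r, rfl⟩ := h
  rw [derivative_mul, derivative_pow]
  refine dvd_add ?_ ?_
  · exact Dvd.dvd.mul_right (Dvd.dvd.mul_right (dvd_mul_left _ _) _) _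
  · exact (pow_dvd_pow q m.le_succ).mul_right _

private lemma aux_dvd (n : ℕ) : ∀ k : ℕ,
    ((X : ℝ[X]) ^ 2 - 1) ^ (n - k) ∣ Polynomial.derivative^[k] (((X : ℝ[X]) ^ 2 - 1) ^ n) := by
  intro k
  induction k with
  | zero => simp
  | succ k ih =>
    rw [Function.iterate_succ_apply']
    rcases le_or_gt n (k + 1) with h | h
    · simpa [Nat.sub_eq_zero_of_le h] using one_dvd _
    · have hk : n - k = (n - (k + 1)) + 1 := by omega
      rw [hk] at ih
      exact aux_dvd_deriv ih

/-- Rolle for finsets of roots of a polynomial. -/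
private lemma rolle_finset (p : ℝ[X]) : ∀ (N : ℕ) (t : Finset ℝ), t.card = N →
    (∀ x ∈ t, Polynomial.eval x p = 0) →
    ∃ u : Finset ℝ, t.card ≤ u.card + 1 ∧
      ∀ y ∈ u, Polynomial.eval y (Polynomial.derivative p) = 0 ∧
        ∃ a ∈ t, ∃ b ∈ t, a < y ∧ y < b := by
  intro N
  induction N with
  | zero =>
    intro t ht _
    exact ⟨∅, by simp [ht], by simp⟩
  | succ N ih =>
    intro t ht hroot
    rcases le_or_gt t.card 1 with h1 | h1
    · exact ⟨∅, by simpa using h1, by simp⟩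
    have htne : t.Nonempty := Finset.card_pos.mp (by omega)
    set a := t.min' htne with ha
    set t' := t.erase a with ht'
    have hat : a ∈ t := t.min'_mem htne
    have ht'card : t'.card = N := by
      rw [ht', Finset.card_erase_of_mem hat, ht]
      omega
    have ht'ne : t'.Nonempty := Finset.card_pos.mp (by omega)
    set b := t'.min' ht'ne with hb
    have hbt' : b ∈ t' := t'.min'_mem ht'ne
    have hbt : b ∈ t := Finset.mem_of_mem_erase hbt'
    have hab : a < b := by
      have h1 : a ≤ b := t.min'_le b hbt
      have h2 : b ≠ a := Finset.ne_of_mem_erase hbt'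
      exact lt_of_le_of_ne h1 (Ne.symm h2)
    obtain ⟨c, hc, hc0⟩ := exists_deriv_eq_zero hab p.continuousOn
      (by rw [hroot a hat, hroot b hbt])
    rw [Polynomial.deriv] at hc0
    obtain ⟨u', hu'card, hu'⟩ := ih t' ht'card
      (fun x hx => hroot x (Finset.mem_of_mem_erase hx))
    have hcu' : c ∉ u' := by
      intro hcm
      obtain ⟨-, a', ha', -, -, hlt, -⟩ := hu' c hcm
      have : b ≤ a' := t'.min'_le a' ha'
      exact absurd (lt_of_le_of_lt this hlt) (not_lt.mpr hc.2.le)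
    refine ⟨insert c u', ?_, ?_⟩
    · rw [Finset.card_insert_of_notMem hcu']
      omega
    · intro y hy
      rcases Finset.mem_insert.mp hy with rfl | hy'
      · exact ⟨hc0, a, hat, b, hbt, hc.1, hc.2⟩
      · obtain ⟨h0, a', ha', b', hb', hl, hr⟩ := hu' y hy'
        exact ⟨h0, a', Finset.mem_of_mem_erase ha', b', Finset.mem_of_mem_erase hb', hl, hr⟩

/-- The `k`-th derivative has at least `k` distinct roots in `(-1, 1)`. -/
private lemma interior_roots (n : ℕ) : ∀ k : ℕ, k ≤ n →
    ∃ s : Finset ℝ, s.card = k ∧ ∀ x ∈ s, x ∈ Set.Ioo (-1 : ℝ) 1 ∧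
      Polynomial.eval x (Polynomial.derivative^[k] (((X : ℝ[X]) ^ 2 - 1) ^ n)) = 0 := by
  intro k
  induction k with
  | zero => exact fun _ => ⟨∅, by simp, by simp⟩
  | succ k ih =>
    intro hk
    obtain ⟨s, hscard, hs⟩ := ih (by omega)
    -- endpoints are roots of the k-th derivative since (X²-1)^(n-k) divides it, n-k ≥ 1
    have hend : ∀ e : ℝ, e = 1 ∨ e = -1 →
        Polynomial.eval e (Polynomial.derivative^[k] (((X : ℝ[X]) ^ 2 - 1) ^ n)) = 0 := by
      intro e he
      obtain ⟨r, hr⟩ := aux_dvd n k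
      have hnk : n - k = (n - k - 1) + 1 := by omega
      rw [hr, hnk, Polynomial.eval_mul, Polynomial.eval_pow]
      have : Polynomial.eval e ((X : ℝ[X]) ^ 2 - 1) = 0 := by
        rcases he with rfl | rfl <;> simp
      rw [pow_succ, this, mul_zero, zero_mul]
    have h1s : (1 : ℝ) ∉ s := fun h => absurd (hs 1 h).1.2 (by norm_num)
    have hm1s : (-1 : ℝ) ∉ s := fun h => absurd (hs (-1) h).1.1 (by norm_num)
    set t : Finset ℝ := insert (-1 : ℝ) (insert 1 s) with htdef
    have htcard : t.card = k + 2 := by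
      rw [htdef, Finset.card_insert_of_notMem (by simp [hm1s]; norm_num),
        Finset.card_insert_of_notMem h1s, hscard]
    have htroot : ∀ x ∈ t, Polynomial.eval x
        (Polynomial.derivative^[k] (((X : ℝ[X]) ^ 2 - 1) ^ n)) = 0 := by
      intro x hx
      rcases Finset.mem_insert.mp hx with rfl | hx
      · exact hend _ (Or.inr rfl)
      rcases Finset.mem_insert.mp hx with rfl | hx
      · exact hend _ (Or.inl rfl)
      · exact (hs x hx).2
    obtain ⟨u, hucard, hu⟩ := rolle_finset _ t.card t rfl htroot
    have hk1 : k + 1 ≤ u.card := by omega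
    obtain ⟨u', hu's, hu'card⟩ := Finset.exists_subset_card_eq hk1
    refine ⟨u', hu'card, ?_⟩
    intro y hy
    obtain ⟨h0, a, hat, b, hbt, hl, hr⟩ := hu y (hu's hy)
    have hIcc : ∀ z ∈ t, z ∈ Set.Icc (-1 : ℝ) 1 := by
      intro z hz
      rcases Finset.mem_insert.mp hz with rfl | hz
      · constructor <;> norm_num
      rcases Finset.mem_insert.mp hz with rfl | hz
      · constructor <;> norm_num
      · exact Set.Ioo_subset_Icc_self (hs z hz).1
    refine ⟨⟨lt_of_le_of_lt (hIcc a hat).1 hl, lt_of_lt_of_le hr (hIcc b hbt).2⟩, ?_⟩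
    rw [Function.iterate_succ_apply']
    exact h0

private lemma deg_iter (n : ℕ) : ∀ k : ℕ, k ≤ 2 * n →
    (Polynomial.derivative^[k] (((X : ℝ[X]) ^ 2 - 1) ^ n)).natDegree = 2 * n - k := by
  have hbase : (((X : ℝ[X]) ^ 2 - 1) ^ n).natDegree = 2 * n := by
    rw [Polynomial.natDegree_pow]
    have : ((X : ℝ[X]) ^ 2 - 1) = X ^ 2 - C 1 := by simp
    rw [this, Polynomial.natDegree_X_pow_sub_C]
    ring
  intro k
  induction k with
  | zero => simpa using hbase
  | succ k ih =>
    intro hk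
    have ihk := ih (by omega)
    rw [Function.iterate_succ_apply']
    have hpos : 0 < (Polynomial.derivative^[k] (((X : ℝ[X]) ^ 2 - 1) ^ n)).natDegree := by
      omega
    have := Polynomial.degree_derivative_eq _ hpos
    have h2 := Polynomial.natDegree_eq_of_degree_eq_some this
    rw [h2, ihk]
    omega

/-- For every `n ≥ 1`, the `n`-th derivative of `(X² − 1)ⁿ ∈ ℝ[X]` is a polynomial of
degree `n` having exactly `n` distinct real roots, all lying in the open interval `(−1, 1)`. -/
theorem legendre_rodrigues_roots (n : ℕ) (hn : 1 ≤ n)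
    (P : ℝ[X]) (hP : P = (Polynomial.derivative)^[n] ((X ^ 2 - 1) ^ n)) :
    P.natDegree = n ∧
    P.roots.toFinset.card = n ∧
    ∀ x ∈ P.roots.toFinset, x ∈ Set.Ioo (-1 : ℝ) 1 := by
  have hdeg : P.natDegree = n := by
    rw [hP, deg_iter n n (by omega)]; omega
  have hP0 : P ≠ 0 := by
    intro h
    rw [h, Polynomial.natDegree_zero] at hdeg
    omega
  obtain ⟨s, hscard, hs⟩ := interior_roots n n le_rfl
  have hsub : s ⊆ P.roots.toFinset := by
    intro x hx
    rw [Multiset.mem_toFinset, Polynomial.mem_roots hP0]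
    rw [hP]
    exact (hs x hx).2
  have hle : P.roots.toFinset.card ≤ n := by
    calc P.roots.toFinset.card ≤ Multiset.card P.roots := Multiset.toFinset_card_le _
      _ ≤ P.natDegree := Polynomial.card_roots' P
      _ = n := hdeg
  have hge : n ≤ P.roots.toFinset.card := hscard ▸ Finset.card_le_card hsub
  have heq : s = P.roots.toFinset := Finset.eq_of_subset_of_card_le hsub (by omega)
  refine ⟨hdeg, by omega, ?_⟩
  intro x hx
  rw [← heq] at hx
  exact (hs x hx).1
end

section
/- For every natural number n ≥ 1, the real polynomial (1 − X²) · d^{n+1}/dX^{n+1} (X² − 1)ⁿ (that is, (1 − X²)·P_n′(X) up to the positive Rodrigues normalization constant) has exactly n + 1 distinct real roots, all lying in the closed interval [−1, 1]; these roots include the two endpoints −1 and +1, and the remaining n − 1 roots lie in the open interval (−1, 1). -/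
open Polynomial


lemma deriv_ne_zero_natDegree {q : ℝ[X]} {d : ℕ} (h : q.natDegree = d + 1) :
    derivative q ≠ 0 ∧ (derivative q).natDegree = d := by
  have hq : q ≠ 0 := fun h0 => by simp [h0] at h
  have hne : (derivative q).coeff d ≠ 0 := by
    rw [coeff_derivative]
    refine mul_ne_zero ?_ (Nat.cast_add_one_ne_zero d)
    rw [← h]
    exact leadingCoeff_ne_zero.mpr hq
  have h1 : derivative q ≠ 0 := fun h0 => hne (by simp [h0])
  refine ⟨h1, le_antisymm ?_ (le_natDegree_of_ne_zero hne)⟩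
  calc (derivative q).natDegree ≤ q.natDegree - 1 := natDegree_derivative_le q
    _ = d := by omega

lemma rolle_step (q : ℝ[X]) (m : ℕ) (T : Finset ℝ) (hT : T.card = m + 2)
    (hIcc : ∀ x ∈ T, x ∈ Set.Icc (-1:ℝ) 1) (hroot : ∀ x ∈ T, eval x q = 0) :
    ∃ S : Finset ℝ, S.card = m + 1 ∧ (∀ x ∈ S, x ∈ Set.Ioo (-1:ℝ) 1) ∧
      ∀ x ∈ S, eval x (derivative q) = 0 := by
  set e := T.orderIsoOfFin hT with he
  have key : ∀ i : Fin (m + 1), ∃ z, z ∈ Set.Ioo ((e i.castSucc : ℝ)) ((e i.succ : ℝ)) ∧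
      eval z (derivative q) = 0 := by
    intro i
    have hlt : ((e i.castSucc : ℝ)) < ((e i.succ : ℝ)) := by
      exact_mod_cast e.strictMono (Fin.castSucc_lt_succ : i.castSucc < i.succ)
    have heq : eval ((e i.castSucc : ℝ)) q = eval ((e i.succ : ℝ)) q := by
      rw [hroot _ (e i.castSucc).2, hroot _ (e i.succ).2]
    obtain ⟨z, hz1, hz2⟩ := exists_deriv_eq_zero hlt q.continuousOn heq
    exact ⟨z, hz1, by rwa [← q.deriv]⟩
  choose z hz1 hz2 using key
  have hmono : StrictMono z := by
    intro i j hij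
    calc z i < (e i.succ : ℝ) := (hz1 i).2
      _ ≤ (e j.castSucc : ℝ) := by
          exact_mod_cast e.monotone (Fin.succ_le_castSucc_iff.mpr hij)
      _ < z j := (hz1 j).1
  refine ⟨Finset.image z Finset.univ, ?_, ?_, ?_⟩
  · rw [Finset.card_image_of_injective _ hmono.injective, Finset.card_univ, Fintype.card_fin]
  · intro x hx
    obtain ⟨i, _, rfl⟩ := Finset.mem_image.mp hx
    constructor
    · exact lt_of_le_of_lt (hIcc _ (e i.castSucc).2).1 (hz1 i).1
    · exact lt_of_lt_of_le (hz1 i).2 (hIcc _ (e i.succ).2).2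
  · intro x hx
    obtain ⟨i, _, rfl⟩ := Finset.mem_image.mp hx
    exact hz2 i

/-- For every `n ≥ 1`, the polynomial `(1 − X²) · d^{n+1}/dX^{n+1} (X² − 1)ⁿ ∈ ℝ[X]`
(i.e. `(1 − X²)·P_n′(X)` up to the positive Rodrigues normalization constant) has exactly
`n + 1` distinct real roots, all in `[−1, 1]`; these include the endpoints `−1` and `+1`,
and the remaining `n − 1` roots lie in the open interval `(−1, 1)`. -/
theorem gauss_lobatto_points (n : ℕ) (hn : 1 ≤ n)
    (Q : ℝ[X]) (hQ : Q = (1 - X ^ 2) * (Polynomial.derivative)^[n + 1] ((X ^ 2 - 1) ^ n)) :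
    Q.roots.toFinset.card = n + 1 ∧
    (∀ x ∈ Q.roots.toFinset, x ∈ Set.Icc (-1 : ℝ) 1) ∧
    (-1 : ℝ) ∈ Q.roots.toFinset ∧
    (1 : ℝ) ∈ Q.roots.toFinset ∧
    (Q.roots.toFinset \ {(-1 : ℝ), 1}).card = n - 1 ∧
    ∀ x ∈ Q.roots.toFinset, x ≠ -1 → x ≠ 1 → x ∈ Set.Ioo (-1 : ℝ) 1 := by
  set p : ℝ[X] := ((X : ℝ[X]) ^ 2 - 1) ^ n with hp
  set f : ℕ → ℝ[X] := fun k => (derivative)^[k] p with hf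
  -- p factors
  have hfac : (X : ℝ[X]) ^ 2 - 1 = (X - C 1) * (X - C (-1)) := by
    simp only [map_one, map_neg]; ring
  have hmonic : p.Monic := by
    rw [hp, hfac]
    exact ((monic_X_sub_C 1).mul (monic_X_sub_C (-1))).pow n
  have hp0 : p ≠ 0 := hmonic.ne_zero
  have hpdeg : p.natDegree = 2 * n := by
    rw [hp, hfac]
    rw [((monic_X_sub_C (1:ℝ)).mul (monic_X_sub_C (-1))).natDegree_pow]
    rw [natDegree_mul (X_sub_C_ne_zero 1) (X_sub_C_ne_zero (-1)),
      natDegree_X_sub_C, natDegree_X_sub_C]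
    ring
  have hstep : ∀ m, f (m + 1) = derivative (f m) := fun m =>
    Function.iterate_succ_apply' derivative m p
  -- degrees of iterated derivatives
  have hdeg : ∀ k, k ≤ 2 * n → f k ≠ 0 ∧ (f k).natDegree = 2 * n - k := by
    intro k hk
    induction k with
    | zero => simpa [hf] using ⟨hp0, hpdeg⟩
    | succ m ih =>
      obtain ⟨h1, h2⟩ := ih (by omega)
      have h2' : (f m).natDegree = (2 * n - (m+1)) + 1 := by omega
      have := deriv_ne_zero_natDegree h2'
      rw [hstep]
      exact this
  -- divisibility at endpoints
  have hdvd : ∀ a : ℝ, (X - C a) ^ n ∣ p → ∀ k, k ≤ n → (X - C a) ^ (n - k) ∣ f k := by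
    intro a ha k hk
    induction k with
    | zero => simpa [hf] using ha
    | succ m ih =>
      have hd := ih (by omega)
      have h1 : f m ≠ 0 := (hdeg m (by omega)).1
      have h2 : n - m ≤ rootMultiplicity a (f m) := (le_rootMultiplicity_iff h1).mpr hd
      have h3 : n - (m + 1) ≤ rootMultiplicity a (derivative (f m)) := by
        have := rootMultiplicity_sub_one_le_derivative_rootMultiplicity (f m) a
        omega
      have h4 : derivative (f m) ≠ 0 := by
        have := (hdeg (m+1) (by omega)).1
        rwa [hstep] at this
      have := (le_rootMultiplicity_iff h4).mp h3
      rwa [hstep]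
  have hdvd1 : ∀ k, k ≤ n → (X - C (1:ℝ)) ^ (n - k) ∣ f k := by
    refine hdvd 1 ?_
    rw [hp, hfac, mul_pow]; exact Dvd.intro _ rfl
  have hdvdm1 : ∀ k, k ≤ n → (X - C (-1:ℝ)) ^ (n - k) ∣ f k := by
    refine hdvd (-1) ?_
    rw [hp, hfac, mul_pow]; exact Dvd.intro_left _ rfl
  have hend : ∀ k, k < n → eval (1:ℝ) (f k) = 0 ∧ eval (-1:ℝ) (f k) = 0 := by
    intro k hk
    constructor
    · have := (dvd_pow_self (X - C (1:ℝ)) (by omega : n - k ≠ 0)).trans (hdvd1 k (by omega))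
      exact (dvd_iff_isRoot.mp this)
    · have := (dvd_pow_self (X - C (-1:ℝ)) (by omega : n - k ≠ 0)).trans (hdvdm1 k (by omega))
      exact (dvd_iff_isRoot.mp this)
  -- main induction: k distinct interior roots of f k
  have main : ∀ k, k ≤ n → ∃ S : Finset ℝ, S.card = k ∧
      (∀ x ∈ S, x ∈ Set.Ioo (-1:ℝ) 1) ∧ ∀ x ∈ S, eval x (f k) = 0 := by
    intro k hk
    induction k with
    | zero => exact ⟨∅, by simp⟩
    | succ m ih =>
      obtain ⟨S, hS1, hS2, hS3⟩ := ih (by omega)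
      set T : Finset ℝ := insert (-1) (insert 1 S) with hT
      have h1S : (1:ℝ) ∉ S := fun h => by have := (hS2 1 h).2; linarith
      have hm1S : (-1:ℝ) ∉ insert 1 S := by
        simp only [Finset.mem_insert]
        push_neg
        exact ⟨by norm_num, fun h => by have := (hS2 (-1) h).1; linarith⟩
      have hTcard : T.card = m + 2 := by
        rw [hT, Finset.card_insert_of_notMem hm1S, Finset.card_insert_of_notMem h1S, hS1]
      have hTIcc : ∀ x ∈ T, x ∈ Set.Icc (-1:ℝ) 1 := by
        intro x hx
        rcases Finset.mem_insert.mp hx with rfl | hx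
        · constructor <;> norm_num
        rcases Finset.mem_insert.mp hx with rfl | hx
        · constructor <;> norm_num
        · exact Set.Ioo_subset_Icc_self (hS2 x hx)
      have hTroot : ∀ x ∈ T, eval x (f m) = 0 := by
        intro x hx
        rcases Finset.mem_insert.mp hx with rfl | hx
        · exact (hend m (by omega)).2
        rcases Finset.mem_insert.mp hx with rfl | hx
        · exact (hend m (by omega)).1
        · exact hS3 x hx
      obtain ⟨S', h1, h2, h3⟩ := rolle_step (f m) m T hTcard hTIcc hTroot
      refine ⟨S', h1, h2, fun x hx => ?_⟩
      have := h3 x hx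
      rwa [hstep]
  -- interior roots of f (n+1)
  have final : ∃ S : Finset ℝ, S.card = n - 1 ∧
      (∀ x ∈ S, x ∈ Set.Ioo (-1:ℝ) 1) ∧ ∀ x ∈ S, eval x (f (n+1)) = 0 := by
    obtain ⟨S, hS1, hS2, hS3⟩ := main n le_rfl
    rcases Nat.lt_or_ge n 2 with h2 | h2
    · exact ⟨∅, by interval_cases n <;> simp⟩
    · obtain ⟨S', h1, h2', h3⟩ := rolle_step (f n) (n - 2) S (by omega)
        (fun x hx => Set.Ioo_subset_Icc_self (hS2 x hx)) hS3
      refine ⟨S', by omega, h2', fun x hx => ?_⟩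
      have := h3 x hx
      rwa [hstep]
  obtain ⟨S, hS1, hS2, hS3⟩ := final
  set g : ℝ[X] := f (n + 1) with hg
  have hg0 : g ≠ 0 := (hdeg (n+1) (by omega)).1
  have hgdeg : g.natDegree = n - 1 := by
    have := (hdeg (n+1) (by omega)).2
    rw [← hg] at this
    omega
  have hsub : S ⊆ g.roots.toFinset := by
    intro x hx
    rw [Multiset.mem_toFinset, mem_roots hg0]
    exact hS3 x hx
  have hcard_le : g.roots.toFinset.card ≤ n - 1 := by
    calc g.roots.toFinset.card ≤ Multiset.card g.roots := Multiset.toFinset_card_le _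
      _ ≤ g.natDegree := card_roots' g
      _ = n - 1 := hgdeg
  have hSeq : S = g.roots.toFinset :=
    Finset.eq_of_subset_of_card_le hsub (by omega)
  have hgIoo : ∀ x ∈ g.roots.toFinset, x ∈ Set.Ioo (-1:ℝ) 1 := by
    rw [← hSeq]; exact hS2
  -- now Q
  have h1X : ((1:ℝ[X]) - X ^ 2) ≠ 0 := fun h => by
    have := congrArg (eval 0) h
    simp at this
  have hQg : Q = (1 - X ^ 2) * g := by rw [hQ]
  have hQ0 : Q ≠ 0 := by rw [hQg]; exact mul_ne_zero h1X hg0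
  have hmem : ∀ x : ℝ, x ∈ Q.roots.toFinset ↔ (x = -1 ∨ x = 1 ∨ x ∈ g.roots.toFinset) := by
    intro x
    rw [Multiset.mem_toFinset, mem_roots hQ0, Multiset.mem_toFinset, mem_roots hg0]
    constructor
    · intro h
      rw [IsRoot, hQg, eval_mul] at h
      rcases mul_eq_zero.mp h with h | h
      · simp only [eval_sub, eval_one, eval_pow, eval_X] at h
        have : (1 - x) * (1 + x) = 0 := by linear_combination h
        rcases mul_eq_zero.mp this with h' | h'
        · right; left; linarith
        · left; linarith
      · exact Or.inr (Or.inr h)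
    · intro h
      rw [IsRoot, hQg, eval_mul]
      rcases h with rfl | rfl | h
      · simp
      · simp
      · rw [h]; ring
  have hQset : Q.roots.toFinset = insert (-1:ℝ) (insert 1 g.roots.toFinset) := by
    ext x
    rw [hmem]
    simp [Finset.mem_insert]
  have h1g : (1:ℝ) ∉ g.roots.toFinset := fun h => by
    have := (hgIoo 1 h).2; linarith
  have hm1g : (-1:ℝ) ∉ insert (1:ℝ) g.roots.toFinset := by
    simp only [Finset.mem_insert]
    push_neg
    exact ⟨by norm_num, fun h => by have := (hgIoo (-1) h).1; linarith⟩
  have hQcard : Q.roots.toFinset.card = n + 1 := by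
    rw [hQset, Finset.card_insert_of_notMem hm1g, Finset.card_insert_of_notMem h1g]
    rw [← hSeq, hS1]
    omega
  refine ⟨hQcard, ?_, ?_, ?_, ?_, ?_⟩
  · intro x hx
    rcases (hmem x).mp hx with rfl | rfl | h
    · constructor <;> norm_num
    · constructor <;> norm_num
    · exact Set.Ioo_subset_Icc_self (hgIoo x h)
  · exact (hmem (-1)).mpr (Or.inl rfl)
  · exact (hmem 1).mpr (Or.inr (Or.inl rfl))
  · have : Q.roots.toFinset \ {(-1:ℝ), 1} = g.roots.toFinset := by
      ext x
      simp only [Finset.mem_sdiff, Finset.mem_insert, Finset.mem_singleton, hmem x]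
      constructor
      · rintro ⟨h1 | h1 | h1, h2⟩
        · exact absurd (Or.inl h1) h2
        · exact absurd (Or.inr h1) h2
        · exact h1
      · intro h
        refine ⟨Or.inr (Or.inr h), ?_⟩
        push_neg
        constructor
        · intro h'; subst h'; exact absurd ((hgIoo _ h).1) (by norm_num)
        · intro h'; subst h'; exact absurd ((hgIoo _ h).2) (by norm_num)
    rw [this, ← hSeq, hS1]
  · intro x hx hx1 hx2
    rcases (hmem x).mp hx with rfl | rfl | h
    · exact absurd rfl hx1
    · exact absurd rfl hx2
    · exact hgIoo x h
end
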